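/- For D ~ Poisson(μ), μ > 0, θ ≥ 2, and g(x) = 1{x ≥ θ}, the three reproduction numbers satisfy R_0^{h2} = μ·P(D ≥ θ) ≤ R_0^{h1} = μ·P(D ≥ θ-1) ≤ R_0^{deg} = μ·P(D ≥ θ-2). -/

import Mathlib

/-!
For Poisson weights `p k = e^{-μ} μ^k / k!` one has `k p_k = μ p_{k-1}`, so the size-biased law
`k p_k / μ` is the law of `D + 1`. Hence `E[f(D̃)] = E[f(D + 1)]` for every `f`, giving
`E[D̃ - 1] = E[D] = μ`, `E[g(D̃)] = P(D ≥ θ - 1)` and, shifting once more,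
`E[(D̃ - 1) g(D̃)] = E[D g(D + 1)] = μ P(D ≥ θ - 2)`. The inequalities follow because the tails
`P(D ≥ m)` decrease in `m`.
-/

open Nat

noncomputable section

/-- Unlike `ProbabilityTheory.poissonMeasure`, the rate is an arbitrary real number. -/
def poissonWeight (μ : ℝ) (k : ℕ) : ℝ := Real.exp (-μ) * μ ^ k / k !

def poissonTail (μ : ℝ) (m : ℕ) : ℝ := ∑' k, if m ≤ k then poissonWeight μ k else 0

section

variable (μ : ℝ)

theorem succ_mul_poissonWeight_succ (k : ℕ) :
    ((k : ℝ) + 1) * poissonWeight μ (k + 1) = μ * poissonWeight μ k := by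
  simp only [poissonWeight, factorial_succ, cast_mul, cast_succ, pow_succ]
  field_simp

theorem hasSum_poissonWeight : HasSum (poissonWeight μ) 1 := by
  have h := (NormedSpace.expSeries_div_hasSum_exp μ).mul_left (Real.exp (-μ))
  rw [← Real.exp_eq_exp_ℝ, ← Real.exp_add, neg_add_cancel, Real.exp_zero] at h
  exact h.congr_fun fun k ↦ mul_div_assoc _ _ _

theorem hasSum_poissonTail (m : ℕ) :
    HasSum (fun k ↦ if m ≤ k then poissonWeight μ k else 0) (poissonTail μ m) :=
  ((hasSum_poissonWeight μ).summable.indicator {k | m ≤ k}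
    |>.congr fun k ↦ by simp [Set.indicator_apply]).hasSum

theorem hasSum_ite_add_mul_poissonWeight (m n : ℕ) :
    HasSum (fun k ↦ (if m ≤ k + n then (1 : ℝ) else 0) * poissonWeight μ k)
      (poissonTail μ (m - n)) := by
  convert hasSum_poissonTail μ (m - n) using 2 with k
  simp only [ite_mul, one_mul, zero_mul, Nat.sub_le_iff_le_add]

theorem HasSum.natCast_mul_poissonWeight {h : ℕ → ℝ} {a : ℝ}
    (hs : HasSum (fun k ↦ h (k + 1) * poissonWeight μ k) a) :
    HasSum (fun k : ℕ ↦ (k : ℝ) * h k * poissonWeight μ k) (μ * a) := by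
  rw [← hasSum_nat_add_iff' 1, Finset.sum_range_one, cast_zero, zero_mul, zero_mul, sub_zero]
  refine (hs.mul_left μ).congr_fun fun k ↦ ?_
  push_cast
  linear_combination h (k + 1) * succ_mul_poissonWeight_succ μ k

theorem hasSum_natCast_mul_poissonWeight :
    HasSum (fun k : ℕ ↦ (k : ℝ) * poissonWeight μ k) μ := by
  simpa using ((hasSum_poissonWeight μ).congr_fun fun k ↦ one_mul _).natCast_mul_poissonWeight
    (h := fun _ ↦ 1) μ

end

theorem poissonWeight_nonneg {μ : ℝ} (hμ : 0 ≤ μ) (k : ℕ) : 0 ≤ poissonWeight μ k := by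
  unfold poissonWeight
  positivity

theorem poissonTail_antitone {μ : ℝ} (hμ : 0 ≤ μ) : Antitone (poissonTail μ) := by
  intro a b hab
  refine hasSum_le (fun k ↦ ?_) (hasSum_poissonTail μ b) (hasSum_poissonTail μ a)
  split_ifs <;> first | exact le_rfl | exact poissonWeight_nonneg hμ k | omega

theorem HasSum.sizeBiased_poissonWeight {μ : ℝ} (hμ : μ ≠ 0) {f : ℕ → ℝ} {a : ℝ}
    (hs : HasSum (fun k ↦ f (k + 1) * poissonWeight μ k) a) :
    HasSum (fun k : ℕ ↦ f k * ((k : ℝ) * poissonWeight μ k / μ)) a := by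
  have h := (hs.natCast_mul_poissonWeight μ).div_const μ
  rw [mul_div_cancel_left₀ a hμ] at h
  exact h.congr_fun fun k ↦ by ring

theorem hasSum_sub_one_mul_sizeBiased_poissonWeight {μ : ℝ} (hμ : μ ≠ 0) :
    HasSum (fun k : ℕ ↦ ((k : ℝ) - 1) * ((k : ℝ) * poissonWeight μ k / μ)) μ :=
  HasSum.sizeBiased_poissonWeight hμ (by simpa using hasSum_natCast_mul_poissonWeight μ)

theorem hasSum_ite_mul_sizeBiased_poissonWeight {μ : ℝ} (hμ : μ ≠ 0) (θ : ℕ) :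
    HasSum (fun k : ℕ ↦ (if θ ≤ k then (1 : ℝ) else 0) * ((k : ℝ) * poissonWeight μ k / μ))
      (poissonTail μ (θ - 1)) :=
  HasSum.sizeBiased_poissonWeight hμ (hasSum_ite_add_mul_poissonWeight μ θ 1)

theorem hasSum_sub_one_mul_ite_mul_sizeBiased_poissonWeight {μ : ℝ} (hμ : μ ≠ 0) (θ : ℕ) :
    HasSum (fun k : ℕ ↦ ((k : ℝ) - 1) * (if θ ≤ k then (1 : ℝ) else 0) *
      ((k : ℝ) * poissonWeight μ k / μ)) (μ * poissonTail μ (θ - 2)) := by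
  refine HasSum.sizeBiased_poissonWeight hμ ?_
  refine ((hasSum_ite_add_mul_poissonWeight μ θ 2).natCast_mul_poissonWeight
    (h := fun k ↦ if θ ≤ k + 1 then 1 else 0) μ).congr_fun fun k ↦ ?_
  push_cast
  ring

end

theorem poisson_threshold_reproduction_numbers_general
    (μ : ℝ) (hμ : 0 < μ)
    (p : ℕ → ℝ) (hp : ∀ k, p k = Real.exp (-μ) * μ^k / (Nat.factorial k))
    (θ : ℕ)
    (tail : ℕ → ℝ) (htail : ∀ m, tail m = ∑' (k : ℕ), if m ≤ k then p k else 0)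
    (R0h2 R0h1 R0deg : ℝ)
    (hR0h2 : R0h2 = (∑' (k : ℕ), ((k : ℝ) - 1) * ((k : ℝ) * p k / μ)) * tail θ)
    (hR0h1 : R0h1 = (∑' (k : ℕ), (if θ ≤ k then (1:ℝ) else 0) * ((k : ℝ) * p k / μ))
        * (∑' (k : ℕ), ((k : ℝ) - 1) * ((k : ℝ) * p k / μ)))
    (hR0deg : R0deg = ∑' (k : ℕ),
        ((k : ℝ) - 1) * (if θ ≤ k then (1:ℝ) else 0) * ((k : ℝ) * p k / μ)) :
    R0h2 = μ * tail θ ∧ R0h1 = μ * tail (θ - 1) ∧ R0deg = μ * tail (θ - 2) ∧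
      R0h2 ≤ R0h1 ∧ R0h1 ≤ R0deg := by
  obtain rfl : p = poissonWeight μ := funext hp
  obtain rfl : tail = poissonTail μ := funext htail
  have hμ₀ : μ ≠ 0 := hμ.ne'
  have hmean := (hasSum_sub_one_mul_sizeBiased_poissonWeight hμ₀).tsum_eq
  have h2 : R0h2 = μ * poissonTail μ θ := by rw [hR0h2, hmean, mul_comm]
  have h1 : R0h1 = μ * poissonTail μ (θ - 1) := by
    rw [hR0h1, hmean, (hasSum_ite_mul_sizeBiased_poissonWeight hμ₀ θ).tsum_eq, mul_comm]
  have hdeg : R0deg = μ * poissonTail μ (θ - 2) := by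
    rw [hR0deg, (hasSum_sub_one_mul_ite_mul_sizeBiased_poissonWeight hμ₀ θ).tsum_eq]
  have htail := poissonTail_antitone hμ.le
  refine ⟨h2, h1, hdeg, ?_, ?_⟩
  · rw [h2, h1]
    gcongr
    exact htail (sub_le θ 1)
  · rw [h1, hdeg]
    gcongr
    exact htail (by omega)

/-- For `D ~ Poisson(μ)`, `θ ≥ 2` and `g(x)=1{x ≥ θ}`, the three
reproduction numbers satisfy
`R_0^{h2} = μ P(D ≥ θ) ≤ R_0^{h1} = μ P(D ≥ θ-1) ≤ R_0^{deg} = μ P(D ≥ θ-2)`.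
Here `D̃` has the size-biased pmf `p̃_k = k p_k / μ`,
`R_0^{h2} = E[D̃-1]·E[g(D)]`, `R_0^{h1} = E[g(D̃)]·E[D̃-1]`,
`R_0^{deg} = E[(D̃-1) g(D̃)]`. -/
theorem poisson_threshold_reproduction_numbers
    (μ : ℝ) (hμ : 0 < μ)
    (p : ℕ → ℝ) (hp : ∀ k, p k = Real.exp (-μ) * μ^k / (Nat.factorial k))
    (θ : ℕ) (hθ : 2 ≤ θ)
    (tail : ℕ → ℝ) (htail : ∀ m, tail m = ∑' (k : ℕ), if m ≤ k then p k else 0)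
    (R0h2 R0h1 R0deg : ℝ)
    (hR0h2 : R0h2 = (∑' (k : ℕ), ((k : ℝ) - 1) * ((k : ℝ) * p k / μ)) * tail θ)
    (hR0h1 : R0h1 = (∑' (k : ℕ), (if θ ≤ k then (1:ℝ) else 0) * ((k : ℝ) * p k / μ))
        * (∑' (k : ℕ), ((k : ℝ) - 1) * ((k : ℝ) * p k / μ)))
    (hR0deg : R0deg = ∑' (k : ℕ),
        ((k : ℝ) - 1) * (if θ ≤ k then (1:ℝ) else 0) * ((k : ℝ) * p k / μ)) :
    R0h2 = μ * tail θ ∧ R0h1 = μ * tail (θ - 1) ∧ R0deg = μ * tail (θ - 2) ∧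
      R0h2 ≤ R0h1 ∧ R0h1 ≤ R0deg :=
  poisson_threshold_reproduction_numbers_general μ hμ p hp θ tail htail R0h2 R0h1 R0deg hR0h2 hR0h1
    hR0deg
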